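/- Let α ≥ ω₁ be a regular cardinal and 0 < n < ω. Then there exists no prime map from C⁻(α,n) to C⁻(α,n+1), i.e., no continuous map f : C⁻(α,n) → C⁻(α,n+1) with f⁻¹(∞) = {∞}. -/

import Mathlib

universe u v

/-- `CIdx K m` represents the set `αⁿ` for `n = m+1`, where `K` plays the role of `α`. -/
def CIdx (K : Type u) : ℕ → Type u
  | 0 => K
  | m + 1 => K × CIdx K m

/-- Given a subset `U` of `(α × αⁿ) ∪ {∞}` and `ξ`, the set `{x ∈ αⁿ : (ξ,x) ∈ U} ∪ {∞}`. -/
def cslice {K J : Type u} (U : Set (Option (K × J))) (ξ : K) : Set (Option J) :=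
  insert none (Option.some '' {x : J | Option.some (ξ, x) ∈ U})

/-- The openness predicate of the space `C⁻(α, m+1)`. -/
def CIsOpen (K : Type u) : (m : ℕ) → Set (Option (CIdx K m)) → Prop
  | 0, U => none ∈ U → Cardinal.mk ((Option.some ⁻¹' U)ᶜ : Set K) < Cardinal.mk K
  | m + 1, U => none ∈ U →
      Cardinal.mk (({ξ : K | CIsOpen K m (cslice U ξ)}ᶜ : Set K)) < Cardinal.mk K

theorem cslice_mono {K J : Type u} {U V : Set (Option (K × J))} (h : U ⊆ V) (ξ : K) :
    cslice U ξ ⊆ cslice V ξ := by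
  intro z hz
  rcases hz with hz | hz
  · exact Or.inl hz
  · rcases hz with ⟨x, hx, rfl⟩
    exact Or.inr ⟨x, h hx, rfl⟩

theorem none_mem_cslice {K J : Type u} (U : Set (Option (K × J))) (ξ : K) :
    none ∈ cslice U ξ := Set.mem_insert _ _

theorem cisOpen_of_none_not_mem (K : Type u) (m : ℕ) (U : Set (Option (CIdx K m)))
    (h : none ∉ U) : CIsOpen K m U := by
  cases m with
  | zero => exact fun hU => absurd hU h
  | succ m => exact fun hU => absurd hU h

theorem cisOpen_mono (K : Type u) (m : ℕ) :
    ∀ U V : Set (Option (CIdx K m)), CIsOpen K m U → U ⊆ V → (none ∈ V → none ∈ U) →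
      CIsOpen K m V := by
  induction m with
  | zero =>
    intro U V hU hUV hnone hV
    refine lt_of_le_of_lt (Cardinal.mk_le_mk_of_subset ?_) (hU (hnone hV))
    intro k hk hU'
    exact hk (hUV hU')
  | succ m ih =>
    intro U V hU hUV hnone hV
    refine lt_of_le_of_lt (Cardinal.mk_le_mk_of_subset ?_) (hU (hnone hV))
    intro ξ hξ hopen
    exact hξ (ih _ _ hopen (cslice_mono hUV ξ) (fun _ => none_mem_cslice U ξ))

theorem cslice_univ {K J : Type u} (ξ : K) :
    cslice (Set.univ : Set (Option (K × J))) ξ = Set.univ := by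
  ext z
  cases z with
  | none => simp [cslice]
  | some j => simp [cslice]

theorem cisOpen_univ (K : Type u) [Nonempty K] (m : ℕ) : CIsOpen K m Set.univ := by
  cases m with
  | zero =>
    intro _
    show Cardinal.mk ((Option.some ⁻¹' (Set.univ : Set (Option K)))ᶜ : Set K) < Cardinal.mk K
    simp only [Set.preimage_univ, Set.compl_univ, Cardinal.mk_emptyCollection]
    exact Cardinal.mk_ne_zero K |>.bot_lt
  | succ m =>
    intro _
    have h : ({ξ : K | CIsOpen K m (cslice (Set.univ : Set (Option (CIdx K (m+1)))) ξ)}ᶜ : Set K)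
        = ∅ := by
      ext ξ
      simp only [Set.mem_compl_iff, Set.mem_setOf_eq, Set.mem_empty_iff_false, iff_false, not_not]
      rw [show cslice (Set.univ : Set (Option (CIdx K (m+1)))) ξ = Set.univ from cslice_univ ξ]
      exact cisOpen_univ K m
    rw [h, Cardinal.mk_emptyCollection]
    exact Cardinal.mk_ne_zero K |>.bot_lt

theorem some_mem_cslice_iff {K J : Type u} (U : Set (Option (K × J))) (ξ : K) (x : J) :
    some x ∈ cslice U ξ ↔ some (ξ, x) ∈ U := by
  simp [cslice]

theorem cslice_inter {K J : Type u} (U V : Set (Option (K × J))) (ξ : K) :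
    cslice (U ∩ V) ξ = cslice U ξ ∩ cslice V ξ := by
  ext z
  cases z with
  | none => simp [none_mem_cslice]
  | some x => simp [some_mem_cslice_iff]

theorem cisOpen_inter (K : Type u) [Infinite K] (m : ℕ) :
    ∀ U V : Set (Option (CIdx K m)), CIsOpen K m U → CIsOpen K m V →
      CIsOpen K m (U ∩ V) := by
  induction m with
  | zero =>
    intro U V hU hV h
    have hsub : ((Option.some ⁻¹' (U ∩ V))ᶜ : Set K) ⊆
        (Option.some ⁻¹' U)ᶜ ∪ (Option.some ⁻¹' V)ᶜ := by
      intro k hk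
      by_cases h1 : (some k : Option (CIdx K 0)) ∈ U
      · exact Or.inr (show (some k : Option (CIdx K 0)) ∉ V from fun h2 => hk ⟨h1, h2⟩)
      · exact Or.inl h1
    refine lt_of_le_of_lt (Cardinal.mk_le_mk_of_subset hsub) ?_
    refine lt_of_le_of_lt (Cardinal.mk_union_le _ _) ?_
    exact Cardinal.add_lt_of_lt (Cardinal.aleph0_le_mk K) (hU h.1) (hV h.2)
  | succ m ih =>
    intro U V hU hV h
    have hsub : ({ξ : K | CIsOpen K m (cslice (U ∩ V) ξ)}ᶜ : Set K) ⊆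
        {ξ : K | CIsOpen K m (cslice U ξ)}ᶜ ∪ {ξ : K | CIsOpen K m (cslice V ξ)}ᶜ := by
      intro ξ hξ
      by_contra hc
      simp only [Set.mem_union, Set.mem_compl_iff, Set.mem_setOf_eq, not_not] at hc hξ
      push_neg at hc
      exact hξ (by
        rw [show cslice (U ∩ V) ξ = cslice U ξ ∩ cslice V ξ from cslice_inter U V ξ]
        exact ih _ _ hc.1 hc.2)
    refine lt_of_le_of_lt (Cardinal.mk_le_mk_of_subset hsub) ?_
    refine lt_of_le_of_lt (Cardinal.mk_union_le _ _) ?_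
    exact Cardinal.add_lt_of_lt (Cardinal.aleph0_le_mk K) (hU h.1) (hV h.2)

theorem cisOpen_sUnion (K : Type u) (m : ℕ) (S : Set (Set (Option (CIdx K m))))
    (hS : ∀ U ∈ S, CIsOpen K m U) : CIsOpen K m (⋃₀ S) := by
  by_cases h : none ∈ ⋃₀ S
  · obtain ⟨U, hUS, hU⟩ := h
    exact cisOpen_mono K m U _ (hS U hUS) (Set.subset_sUnion_of_mem hUS) (fun _ => hU)
  · exact cisOpen_of_none_not_mem _ _ _ h

/-- The space `C⁻(α, m+1)` from the paper (so `m = 0` gives `C(α)` itself);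
`K` plays the role of the set of ordinals `< α` and `none` plays the role of `∞`. -/
def CTop (K : Type u) [Infinite K] (m : ℕ) : TopologicalSpace (Option (CIdx K m)) where
  IsOpen := CIsOpen K m
  isOpen_univ := cisOpen_univ K m
  isOpen_inter := cisOpen_inter K m
  isOpen_sUnion := cisOpen_sUnion K m

instance instCTop (K : Type u) [Infinite K] (m : ℕ) : TopologicalSpace (Option (CIdx K m)) :=
  CTop K m


/-!
Write `F m` (`cfilter hreg m`) for the trace on `αᵐ⁺¹` of the neighbourhood filter of `∞` in
`C⁻(α, m+1)`: `F 0` is the filter of sets with complement of size `< α`, and `F (m+1)` is its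
Fubini product (`Filter.curry`) with `F m`; all of them are `α`-complete. A prime map restricts to some `g : αᵐ⁺¹ → αᵐ⁺²` tending
to `F (m+1)` along `F m`, and we show by induction that no `g` does so even on an `F m`-positive set.

For `α` columns `ξ`, the induction hypothesis gives a small `D ξ` catching a positive part of the
slice of that set; pushing it forward by the first coordinate of `g` yields an `α`-complete filter
`μ ξ` on `α`. Either `α` of the `μ ξ` have an atom, or `α` of them are diffuse, hence concentrated
above `ξ` in a well-order of type `α`. Either way there are `μ ξ`-positive sets `E ξ` such that
almost every `η` lies in fewer than `α` of them, so `⋃ ξ, E ξ ×ˢ D ξ` is small, while its preimage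
under `g` meets the given set positively.
-/

open Set Filter Cardinal Topology

theorem exists_linearOrder_mk_Iic_lt (K : Type u) [Infinite K] :
    ∃ _ : LinearOrder K, ∀ ξ : K, #(Iic ξ) < #K := by
  classical
  obtain ⟨r, _, hr⟩ := exists_ord_eq K
  let := linearOrderOfSTO r
  refine ⟨this, fun ξ => ?_⟩
  rw [← Iio_insert]
  exact mk_insert_le.trans_lt <| add_lt_of_lt (aleph0_le_mk K) (mk_Iio_lt ξ hr)
    (one_lt_aleph0.trans_le (aleph0_le_mk K))

namespace Filter

instance cardinalInterFilter_curry {α β : Type u} {c : Cardinal.{u}} (l : Filter α)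
    (m : Filter β) [CardinalInterFilter l c] [CardinalInterFilter m c] :
    CardinalInterFilter (l.curry m) c where
  cardinal_sInter_mem S hS hSmem := by
    simp only [mem_curry_iff, mem_sInter] at hSmem ⊢
    exact ((eventually_cardinal_ball hS).2 hSmem).mono fun _ ha =>
      (eventually_cardinal_ball hS).2 ha

instance curry_neBot {α β : Type*} (l : Filter α) (m : Filter β) [l.NeBot] [m.NeBot] :
    (l.curry m).NeBot := by
  rw [← frequently_true_iff_neBot, frequently_curry_iff]
  exact (frequently_true_iff_neBot l).2 ‹_› |>.mono fun _ _ => (frequently_true_iff_neBot m).2 ‹_›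

instance cocardinal_neBot {α : Type u} (hreg : (#α).IsRegular) : (cocardinal α hreg).NeBot := by
  rw [← frequently_true_iff_neBot, frequently_cocardinal]
  simp

end Filter

/-- Equivalently: for no `g` and no `l`-positive `P` does `g` tend to `G` along `l ⊓ 𝓟 P`. -/
def NowhereTendsto {X Y : Type*} (l : Filter X) (G : Filter Y) : Prop :=
  ∀ (g : X → Y) (P : Set X), (∃ᶠ x in l, x ∈ P) → ∃ C, Cᶜ ∈ G ∧ ∃ᶠ x in l, x ∈ P ∧ g x ∈ C

section Cocardinal

variable {K : Type u} {hreg : (#K).IsRegular}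

theorem exists_sparse_frequently_mem (μ : K → Filter K) [∀ ξ, CardinalInterFilter (μ ξ) #K]
    (hμ : ∃ᶠ ξ in cocardinal K hreg, (μ ξ).NeBot) :
    ∃ E : K → Set K, (∃ᶠ ξ in cocardinal K hreg, ∃ᶠ η in μ ξ, η ∈ E ξ) ∧
      ∀ᶠ η in cocardinal K hreg, #{ξ | η ∈ E ξ} < #K := by
  have : Infinite K := infinite_iff.2 hreg.aleph0_le
  set A := {ξ | ∃ η, ∃ᶠ x in μ ξ, x = η}
  by_cases hatom : ∃ᶠ ξ in cocardinal K hreg, ξ ∈ A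
  · choose! a ha using fun ξ (hξ : ξ ∈ A) => hξ
    by_cases hfib : ∃ η₀, ∃ᶠ ξ in cocardinal K hreg, ξ ∈ A ∧ a ξ = η₀
    · obtain ⟨η₀, hη₀⟩ := hfib
      refine ⟨fun ξ => {η | ξ ∈ A ∧ a ξ = η₀ ∧ η = η₀},
        hη₀.mono fun ξ ⟨hξ, haξ⟩ => (ha ξ hξ).mono fun _ hx => ⟨hξ, haξ, hx.trans haξ⟩,
        (eventually_cocardinal_ne η₀).mono fun η hη => ?_⟩
      simp [hη, hreg.pos]
    · refine ⟨fun ξ => {η | ξ ∈ A ∧ a ξ = η},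
        hatom.mono fun ξ hξ => (ha ξ hξ).mono fun _ hx => ⟨hξ, hx.symm⟩,
        Eventually.of_forall fun η => ?_⟩
      exact not_le.1 fun h => hfib ⟨η, frequently_cocardinal.2 h⟩
  · obtain ⟨_, hIic⟩ := exists_linearOrder_mk_Iic_lt K
    set B := {ξ | (μ ξ).NeBot ∧ ∀ η, ∀ᶠ x in μ ξ, x ≠ η}
    have hB : ∃ᶠ ξ in cocardinal K hreg, ξ ∈ B := by
      refine hμ.and_eventually ((not_frequently.1 hatom).mono fun ξ hξ η => ?_)
      exact not_frequently.1 fun h => hξ ⟨η, h⟩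
    refine ⟨fun ξ => {η | ξ ∈ B ∧ ξ < η}, hB.mono fun ξ hξ => ?_,
      Eventually.of_forall fun η => ?_⟩
    · have : (μ ξ).NeBot := hξ.1
      -- `μ ξ` is `#K`-complete and misses every point, hence every set of size `< #K`
      have hfar : ∀ᶠ x in μ ξ, ∀ η ∈ Iic ξ, x ≠ η :=
        (eventually_cardinal_ball (hIic ξ)).2 fun η _ => hξ.2 η
      exact (hfar.mono fun x hx => ⟨hξ, lt_of_not_ge fun hle => hx x hle rfl⟩).frequently
    · exact (mk_le_mk_of_subset fun ξ hξ => hξ.2.le).trans_lt (hIic η)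

theorem compl_iUnion_prod_mem_curry {Y : Type u} {G : Filter Y} [CardinalInterFilter G #K]
    {E : K → Set K} {D : K → Set Y} (hE : ∀ᶠ η in cocardinal K hreg, #{ξ | η ∈ E ξ} < #K)
    (hD : ∀ ξ, (D ξ)ᶜ ∈ G) : (⋃ ξ, E ξ ×ˢ D ξ)ᶜ ∈ (cocardinal K hreg).curry G := by
  rw [mem_curry_iff]
  filter_upwards [hE] with η hη
  filter_upwards [(eventually_cardinal_ball hη).2 fun ξ _ => hD ξ] with y hy
  simp only [mem_compl_iff, mem_iUnion, mem_prod, not_exists, not_and]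
  exact hy

theorem nowhereTendsto_cocardinal_curry :
    NowhereTendsto (cocardinal K hreg) ((cocardinal K hreg).curry (cocardinal K hreg)) := by
  intro g P hP
  obtain ⟨E, hEfreq, hEsparse⟩ := exists_sparse_frequently_mem (hreg := hreg)
    (fun ξ => 𝓟 {η | ξ ∈ P ∧ η = (g ξ).1})
    (hP.mono fun ξ hξ => principal_neBot_iff.2 ⟨_, hξ, rfl⟩)
  refine ⟨⋃ ξ, E ξ ×ˢ {(g ξ).2},
    compl_iUnion_prod_mem_curry hEsparse fun ξ => (finite_singleton _).compl_mem_cocardinal,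
    hEfreq.mono fun ξ hξ => ?_⟩
  obtain ⟨_, ⟨hξP, rfl⟩, hE⟩ := frequently_principal.1 hξ
  exact ⟨hξP, mem_iUnion.2 ⟨ξ, hE, rfl⟩⟩

theorem NowhereTendsto.curry {X Y : Type u} {l : Filter X} {G : Filter Y}
    [CardinalInterFilter l #K] [CardinalInterFilter G #K] (h : NowhereTendsto l G) :
    NowhereTendsto ((cocardinal K hreg).curry l) ((cocardinal K hreg).curry G) := by
  intro g P hP
  rw [frequently_curry_iff] at hP
  have hslice : ∀ ξ, ∃ D : Set Y, Dᶜ ∈ G ∧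
      ((∃ᶠ x in l, (ξ, x) ∈ P) → ∃ᶠ x in l, (ξ, x) ∈ P ∧ (g (ξ, x)).2 ∈ D) := by
    intro ξ
    by_cases hξ : ∃ᶠ x in l, (ξ, x) ∈ P
    · obtain ⟨D, hD, hfreq⟩ := h (fun x => (g (ξ, x)).2) {x | (ξ, x) ∈ P} hξ
      exact ⟨D, hD, fun _ => hfreq⟩
    · exact ⟨∅, by simp, fun h => absurd h hξ⟩
  choose D hDG hDfreq using hslice
  obtain ⟨E, hEfreq, hEsparse⟩ := exists_sparse_frequently_mem (hreg := hreg)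
    (fun ξ => map (fun x => (g (ξ, x)).1) (l ⊓ 𝓟 {x | (ξ, x) ∈ P ∧ (g (ξ, x)).2 ∈ D ξ}))
    (hP.mono fun ξ hξ => (frequently_mem_iff_neBot.1 (hDfreq ξ hξ)).map _)
  refine ⟨⋃ ξ, E ξ ×ˢ D ξ, compl_iUnion_prod_mem_curry hEsparse hDG, ?_⟩
  rw [frequently_curry_iff]
  refine hEfreq.mono fun ξ hξ => ?_
  rw [frequently_map, frequently_inf_principal] at hξ
  exact hξ.mono fun x ⟨⟨hP, hD⟩, hE⟩ => ⟨hP, mem_iUnion.2 ⟨ξ, hE, hD⟩⟩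

end Cocardinal

def cfilter {K : Type u} (hreg : (#K).IsRegular) : (m : ℕ) → Filter (CIdx K m)
  | 0 => cocardinal K hreg
  | m + 1 => (cocardinal K hreg).curry (cfilter hreg m)

section CFilter

variable {K : Type u} {hreg : (#K).IsRegular}

instance cardinalInterFilter_cfilter (m : ℕ) : CardinalInterFilter (cfilter hreg m) #K := by
  induction m with
  | zero => exact instCardinalInterFilter_cocardinal
  | succ m ih => exact cardinalInterFilter_curry _ _

instance cfilter_neBot (m : ℕ) : (cfilter hreg m).NeBot := by
  induction m with
  | zero => exact cocardinal_neBot hreg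
  | succ m ih => exact curry_neBot _ _

theorem nowhereTendsto_cfilter (m : ℕ) :
    NowhereTendsto (cfilter hreg m) (cfilter hreg (m + 1)) := by
  induction m with
  | zero => exact nowhereTendsto_cocardinal_curry
  | succ m ih => exact ih.curry

theorem cisOpen_iff_preimage_some_mem_cfilter (m : ℕ) {U : Set (Option (CIdx K m))}
    (hU : none ∈ U) : CIsOpen K m U ↔ some ⁻¹' U ∈ cfilter hreg m := by
  induction m with
  | zero => exact ⟨fun h => h hU, fun h _ => h⟩
  | succ m ih =>
    have hslice (ξ : K) : CIsOpen K m (cslice U ξ) ↔ ∀ᶠ x in cfilter hreg m, some (ξ, x) ∈ U := by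
      rw [ih (none_mem_cslice U ξ)]
      exact Iff.of_eq (congrArg (· ∈ cfilter hreg m) (ext fun x => some_mem_cslice_iff U ξ x))
    simp only [CIsOpen, hslice]
    exact ⟨fun h => h hU, fun h _ => h⟩

theorem comap_some_nhds_none [Infinite K] (m : ℕ) :
    comap some (𝓝 (none : Option (CIdx K m))) = cfilter hreg m := by
  ext S
  rw [mem_comap]
  constructor
  · rintro ⟨t, ht, htS⟩
    obtain ⟨U, hUt, hU, hnone⟩ := mem_nhds_iff.1 ht
    exact mem_of_superset ((cisOpen_iff_preimage_some_mem_cfilter m hnone).1 hU)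
      ((preimage_mono hUt).trans htS)
  · intro hS
    have hpre : some ⁻¹' insert none (some '' S) = S := by
      ext x
      simp
    have hopen : IsOpen (insert none (some '' S)) :=
      (cisOpen_iff_preimage_some_mem_cfilter m (mem_insert _ _)).2 (hpre ▸ hS)
    exact ⟨_, hopen.mem_nhds (mem_insert _ _), hpre.subset⟩

end CFilter

theorem stmt14_general (K : Type u) [Infinite K] (hreg : (Cardinal.mk K).IsRegular) (m : ℕ) :
    ¬ ∃ f : Option (CIdx K m) → Option (CIdx K (m + 1)),
        Continuous f ∧ f ⁻¹' {none} = {none} := by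
  rintro ⟨f, hf, hpre⟩
  have hnone : f none = none := by simpa using hpre.symm.subset (mem_singleton none)
  have hsome (x : CIdx K m) : ∃ y, f (some x) = some y := by
    refine Option.ne_none_iff_exists'.1 fun hx => ?_
    have : some x ∈ f ⁻¹' {none} := hx
    simp [hpre] at this
  choose g hg using hsome
  have hg_tendsto : Tendsto g (cfilter hreg m) (cfilter hreg (m + 1)) := by
    rw [← comap_some_nhds_none m, ← comap_some_nhds_none (m + 1), tendsto_comap_iff]
    have hcomm : some ∘ g = f ∘ some := funext fun x => (hg x).symm
    rw [hcomm]
    exact (hf.tendsto' none none hnone).comp tendsto_comap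
  obtain ⟨C, hC, hfreq⟩ := nowhereTendsto_cfilter m g univ
    ((frequently_true_iff_neBot _).2 inferInstance)
  exact hfreq ((hg_tendsto.eventually_mem hC).mono fun x hx hxC => hx hxC.2)

/-- for a regular cardinal `α ≥ ω₁` (the cardinality of `K`) and `0 < n < ω`,
there is no prime map from `C⁻(α,n)` to `C⁻(α,n+1)`, i.e. no continuous map with
`f ⁻¹' {∞} = {∞}`.  Here `CTop K m` (the instance topology on `Option (CIdx K m)`) is
`C⁻(α, m+1)` and `none` is the point `∞`. -/
theorem stmt14 (K : Type u) [Infinite K] (hreg : (Cardinal.mk K).IsRegular)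
    (hω1 : Cardinal.aleph 1 ≤ Cardinal.mk K) (m : ℕ) :
    ¬ ∃ f : Option (CIdx K m) → Option (CIdx K (m + 1)),
        Continuous f ∧ f ⁻¹' {none} = {none} :=
  stmt14_general K hreg m
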